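/- For any admissible objective function, the recursive sparsest-cut algorithm (which recursively splits the vertex set along an exact sparsest cut) computes a tree of optimal cost — a generating tree — whenever the input is a similarity ground-truth input; analogously, the recursive densest-cut algorithm computes a generating tree whenever the input is a dissimilarity ground-truth input. -/

import Mathlib

open scoped BigOperators

attribute [local instance] Classical.propDecidable

noncomputable section

/-! ### Cluster trees -/

/-- A (binary, rooted) hierarchical-clustering tree whose leaves are labelled by
vertices of `V`. -/
inductive ClusterTree (V : Type) : Type where
  | leaf : V → ClusterTree V
  | node : ClusterTree V → ClusterTree V → ClusterTree V

namespace ClusterTree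

variable {V : Type}

/-- The list of leaf labels of the tree (left-to-right). -/
def leavesList : ClusterTree V → List V
  | leaf v => [v]
  | node L R => leavesList L ++ leavesList R

/-- The set of leaf labels of the tree. -/
def leaves [DecidableEq V] (T : ClusterTree V) : Finset V :=
  T.leavesList.toFinset

end ClusterTree

section Defs

variable {V : Type}

/-- `T` is a cluster tree for the whole (finite) vertex set `V`: its leaves are
pairwise distinct and exhaust the vertices. -/
def IsClusterTree [DecidableEq V] [Fintype V] (T : ClusterTree V) : Prop :=
  T.leavesList.Nodup ∧ T.leaves = Finset.univ

/-- `IsSubtreeOf s T` : `s` occurs as a rooted subtree of `T`. -/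
def IsSubtreeOf : ClusterTree V → ClusterTree V → Prop
  | s, ClusterTree.leaf v => s = ClusterTree.leaf v
  | s, ClusterTree.node L R => s = ClusterTree.node L R ∨ IsSubtreeOf s L ∨ IsSubtreeOf s R

/-- The subtree of `T` rooted at the lowest common ancestor of the leaves `x` and `y`. -/
def lcaSubtree [DecidableEq V] : ClusterTree V → V → V → ClusterTree V
  | ClusterTree.leaf v, _, _ => ClusterTree.leaf v
  | ClusterTree.node L R, x, y =>
    if x ∈ L.leaves ∧ y ∈ L.leaves then lcaSubtree L x y
    else if x ∈ R.leaves ∧ y ∈ R.leaves then lcaSubtree R x y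
    else ClusterTree.node L R

/-- `w(A, B) = ∑_{a ∈ A, b ∈ B} w a b`. -/
def cutWeight (w : V → V → ℝ) (A B : Finset V) : ℝ := ∑ a ∈ A, ∑ b ∈ B, w a b

/-- `w(A) = ∑_{a, b ∈ A} w a b` (ordered pairs; each edge counted twice). -/
def innerWeight (w : V → V → ℝ) (A : Finset V) : ℝ := ∑ a ∈ A, ∑ b ∈ A, w a b

/-- `∑_{e ∈ E} w(e)`, for a symmetric weight function with zero diagonal. -/
def totalWeight [Fintype V] (w : V → V → ℝ) : ℝ := (∑ u : V, ∑ v : V, w u v) / 2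

/-- Cost of a cluster tree: each internal node `N` with children `N₁, N₂`
contributes `w(V(N₁), V(N₂)) · g(|V(N₁)|, |V(N₂)|)`. -/
def treeCost [DecidableEq V] (w : V → V → ℝ) (g : ℕ → ℕ → ℝ) : ClusterTree V → ℝ
  | ClusterTree.leaf _ => 0
  | ClusterTree.node L R =>
      cutWeight w L.leaves R.leaves * g L.leaves.card R.leaves.card
        + treeCost w g L + treeCost w g R

/-- Dasgupta's cost (= `treeCost` with `g (a, b) = a + b`). -/
def dasguptaCost [DecidableEq V] (w : V → V → ℝ) : ClusterTree V → ℝ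
  | ClusterTree.leaf _ => 0
  | ClusterTree.node L R =>
      ((L.leaves.card + R.leaves.card : ℕ) : ℝ) * cutWeight w L.leaves R.leaves
        + dasguptaCost w L + dasguptaCost w R

/-! ### Generating trees -/

/-- `T` is a generating tree for the similarity graph `w` : there is a nonnegative
weight function on the internal nodes, non-increasing from leaves towards the root,
realizing every edge weight at the corresponding LCA. -/
def IsGenerating [DecidableEq V] (w : V → V → ℝ) (T : ClusterTree V) : Prop :=
  ∃ W : ClusterTree V → ℝ,
    (∀ s, IsSubtreeOf s T → 0 ≤ W s) ∧
    (∀ L R, IsSubtreeOf (ClusterTree.node L R) T →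
      ∀ s, IsSubtreeOf s L ∨ IsSubtreeOf s R → W (ClusterTree.node L R) ≤ W s) ∧
    (∀ x y, x ∈ T.leaves → y ∈ T.leaves → x ≠ y → w x y = W (lcaSubtree T x y))

/-- Generating tree in the dissimilarity setting (weights non-decreasing from
leaves towards the root). -/
def IsGeneratingDissim [DecidableEq V] (w : V → V → ℝ) (T : ClusterTree V) : Prop :=
  ∃ W : ClusterTree V → ℝ,
    (∀ s, IsSubtreeOf s T → 0 ≤ W s) ∧
    (∀ L R, IsSubtreeOf (ClusterTree.node L R) T →
      ∀ s, IsSubtreeOf s L ∨ IsSubtreeOf s R → W s ≤ W (ClusterTree.node L R)) ∧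
    (∀ x y, x ∈ T.leaves → y ∈ T.leaves → x ≠ y → w x y = W (lcaSubtree T x y))

/-- Strictly generating tree (similarity setting). -/
def IsStrictlyGenerating [DecidableEq V] (w : V → V → ℝ) (T : ClusterTree V) : Prop :=
  ∃ W : ClusterTree V → ℝ,
    (∀ s, IsSubtreeOf s T → 0 ≤ W s) ∧
    (∀ L R, IsSubtreeOf (ClusterTree.node L R) T →
      ∀ s, IsSubtreeOf s L ∨ IsSubtreeOf s R → W (ClusterTree.node L R) < W s) ∧
    (∀ x y, x ∈ T.leaves → y ∈ T.leaves → x ≠ y → w x y = W (lcaSubtree T x y))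

/-- Strictly generating tree (dissimilarity setting). -/
def IsStrictlyGeneratingDissim [DecidableEq V] (w : V → V → ℝ) (T : ClusterTree V) : Prop :=
  ∃ W : ClusterTree V → ℝ,
    (∀ s, IsSubtreeOf s T → 0 ≤ W s) ∧
    (∀ L R, IsSubtreeOf (ClusterTree.node L R) T →
      ∀ s, IsSubtreeOf s L ∨ IsSubtreeOf s R → W s < W (ClusterTree.node L R)) ∧
    (∀ x y, x ∈ T.leaves → y ∈ T.leaves → x ≠ y → w x y = W (lcaSubtree T x y))

/-! ### Ultrametrics and ground-truth inputs -/

/-- `d` is an ultrametric on `V`. -/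
def IsUltrametric (d : V → V → ℝ) : Prop :=
  (∀ x, d x x = 0) ∧ (∀ x y, d x y = 0 → x = y) ∧ (∀ x y, d x y = d y x) ∧
  (∀ x y, 0 ≤ d x y) ∧ (∀ x y z, d x y ≤ max (d x z) (d y z))

/-- `w` is a similarity graph generated from an ultrametric via a
non-increasing nonnegative function `f`. -/
def GeneratedFromUltrametric (w : V → V → ℝ) : Prop :=
  ∃ (d : V → V → ℝ) (f : ℝ → ℝ),
    IsUltrametric d ∧
    (∀ a b : ℝ, 0 ≤ a → a ≤ b → f b ≤ f a) ∧
    (∀ a : ℝ, 0 ≤ a → 0 ≤ f a) ∧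
    (∀ x y : V, x ≠ y → w x y = f (d x y))

/-- `w` is a dissimilarity graph generated from an ultrametric via a
non-decreasing nonnegative function `f`. -/
def GeneratedFromUltrametricDissim (w : V → V → ℝ) : Prop :=
  ∃ (d : V → V → ℝ) (f : ℝ → ℝ),
    IsUltrametric d ∧
    (∀ a b : ℝ, 0 ≤ a → a ≤ b → f a ≤ f b) ∧
    (∀ a : ℝ, 0 ≤ a → 0 ≤ f a) ∧
    (∀ x y : V, x ≠ y → w x y = f (d x y))

/-- `w` is a similarity graph generated from a *minimal* ultrametric:
pairs with equal weights are at equal ultrametric distance. -/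
def GeneratedFromMinimalUltrametric (w : V → V → ℝ) : Prop :=
  ∃ (d : V → V → ℝ) (f : ℝ → ℝ),
    IsUltrametric d ∧
    (∀ a b : ℝ, 0 ≤ a → a ≤ b → f b ≤ f a) ∧
    (∀ a : ℝ, 0 ≤ a → 0 ≤ f a) ∧
    (∀ x y : V, x ≠ y → w x y = f (d x y)) ∧
    (∀ u v u' v' : V, u ≠ v → u' ≠ v' → f (d u v) = f (d u' v') → d u v = d u' v')

/-- Dissimilarity analogue of `GeneratedFromMinimalUltrametric`. -/
def GeneratedFromMinimalUltrametricDissim (w : V → V → ℝ) : Prop :=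
  ∃ (d : V → V → ℝ) (f : ℝ → ℝ),
    IsUltrametric d ∧
    (∀ a b : ℝ, 0 ≤ a → a ≤ b → f a ≤ f b) ∧
    (∀ a : ℝ, 0 ≤ a → 0 ≤ f a) ∧
    (∀ x y : V, x ≠ y → w x y = f (d x y)) ∧
    (∀ u v u' v' : V, u ≠ v → u' ≠ v' → f (d u v) = f (d u' v') → d u v = d u' v')

/-- `w` is a `δ`-adversarially-perturbed (similarity) ground-truth input. -/
def IsDeltaPerturbedGroundTruth (w : V → V → ℝ) (δ : ℝ) : Prop :=
  ∃ (d : V → V → ℝ) (f : ℝ → ℝ),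
    IsUltrametric d ∧
    (∀ a b : ℝ, 0 ≤ a → a ≤ b → f b ≤ f a) ∧
    (∀ a : ℝ, 0 ≤ a → 0 ≤ f a) ∧
    (∀ x y : V, x ≠ y → f (d x y) ≤ w x y ∧ w x y ≤ δ * f (d x y))

end Defs

/-- The unit-weight clique on `V`. -/
def cliqueW (V : Type) [DecidableEq V] : V → V → ℝ := fun x y => if x = y then 0 else 1

/-- Admissibility of a cost function (similarity setting): on every similarity graph
generated from a minimal ultrametric, a cluster tree minimizes the cost
iff it is a generating tree. -/
def Admissible (g : ℕ → ℕ → ℝ) : Prop :=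
  ∀ (V : Type) [Fintype V] [DecidableEq V] (w : V → V → ℝ),
    GeneratedFromMinimalUltrametric w →
    ∀ T : ClusterTree V, IsClusterTree T →
      ((∀ T' : ClusterTree V, IsClusterTree T' → treeCost w g T ≤ treeCost w g T')
        ↔ IsGenerating w T)

/-- Admissibility of a value function (dissimilarity setting): on every dissimilarity
graph generated from a minimal ultrametric, a cluster tree maximizes the value
iff it is a generating tree. -/
def AdmissibleDissim (g : ℕ → ℕ → ℝ) : Prop :=
  ∀ (V : Type) [Fintype V] [DecidableEq V] (w : V → V → ℝ),
    GeneratedFromMinimalUltrametricDissim w →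
    ∀ T : ClusterTree V, IsClusterTree T →
      ((∀ T' : ClusterTree V, IsClusterTree T' → treeCost w g T' ≤ treeCost w g T)
        ↔ IsGeneratingDissim w T)

/-! ### Agglomerative (linkage) algorithms, modelled as a nondeterministic relation -/

/-- The initial state of an agglomerative algorithm: all singleton trees. -/
def initState (V : Type) [Fintype V] : Multiset (ClusterTree V) :=
  Finset.univ.val.map ClusterTree.leaf

/-- One merge step of a generic linkage algorithm: merge two candidate trees whose
leaf-set distance `D` is best (w.r.t. `better a b` = "`a` is at least as good as `b`")
among all candidate pairs; any tie-breaking choice is allowed. -/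
inductive MergeStep {V : Type} [DecidableEq V] (D : Finset V → Finset V → ℝ)
    (better : ℝ → ℝ → Prop) :
    Multiset (ClusterTree V) → Multiset (ClusterTree V) → Prop where
  | step : ∀ (rest : Multiset (ClusterTree V)) (T1 T2 : ClusterTree V),
      (∀ (T1' T2' : ClusterTree V) (rest' : Multiset (ClusterTree V)),
          T1 ::ₘ T2 ::ₘ rest = T1' ::ₘ T2' ::ₘ rest' →
          better (D T1.leaves T2.leaves) (D T1'.leaves T2'.leaves)) →
      MergeStep D better (T1 ::ₘ T2 ::ₘ rest) (ClusterTree.node T1 T2 ::ₘ rest)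

/-- `T` is a possible output of the linkage algorithm with dissimilarity/similarity
measure `D` and preference `better`. -/
def IsLinkageOutput {V : Type} [Fintype V] [DecidableEq V]
    (D : Finset V → Finset V → ℝ) (better : ℝ → ℝ → Prop) (T : ClusterTree V) : Prop :=
  Relation.ReflTransGen (MergeStep D better) (initState V) {T}

/-- Average-linkage measure. -/
def avgDist {V : Type} (w : V → V → ℝ) (A B : Finset V) : ℝ :=
  cutWeight w A B / ((A.card : ℝ) * (B.card : ℝ))

/-- Single-linkage measure: `min_{x ∈ A, y ∈ B} w x y`. -/
def minLinkDist {V : Type} [DecidableEq V] (w : V → V → ℝ) (A B : Finset V) : ℝ :=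
  (((A ×ˢ B).image fun p => w p.1 p.2).min).untopD 0

/-- Complete-linkage measure: `max_{x ∈ A, y ∈ B} w x y`. -/
def maxLinkDist {V : Type} [DecidableEq V] (w : V → V → ℝ) (A B : Finset V) : ℝ :=
  (((A ×ˢ B).image fun p => w p.1 p.2).max).unbotD 0

/-! ### Cuts -/

section Cuts

variable {V : Type}

/-- `A ⊕ x` : add `x` to `A` if absent, remove it if present. -/
def symmDiffV [DecidableEq V] (A : Finset V) (x : V) : Finset V :=
  if x ∈ A then A.erase x else insert x A

/-- `(A, B)` is an `ε/|A ∪ B|`-locally-densest cut of the induced subgraph on `A ∪ B`. -/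
def IsLocallyDensestCut [DecidableEq V] (w : V → V → ℝ) (ε : ℝ) (A B : Finset V) : Prop :=
  ∀ x ∈ A ∪ B,
    cutWeight w (symmDiffV A x) (symmDiffV B x) /
        (((symmDiffV A x).card : ℝ) * ((symmDiffV B x).card : ℝ)) ≤
      (1 + ε / ((A ∪ B).card : ℝ)) *
        (cutWeight w A B / ((A.card : ℝ) * (B.card : ℝ)))

/-- Cluster trees obtained by recursively splitting along `ε/n`-locally-densest cuts. -/
def IsRecLocallyDensestCutTree [DecidableEq V] (w : V → V → ℝ) (ε : ℝ) :
    ClusterTree V → Prop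
  | ClusterTree.leaf _ => True
  | ClusterTree.node L R =>
      IsLocallyDensestCut w ε L.leaves R.leaves ∧
      IsRecLocallyDensestCutTree w ε L ∧ IsRecLocallyDensestCutTree w ε R

/-- Cluster trees obtained by recursively splitting along `φ`-approximate sparsest cuts. -/
def IsRecApproxSparsestCutTree [DecidableEq V] (w : V → V → ℝ) (φ : ℝ) :
    ClusterTree V → Prop
  | ClusterTree.leaf _ => True
  | ClusterTree.node L R =>
      (∀ S : Finset V, S ⊆ L.leaves ∪ R.leaves → S.Nonempty → S ⊂ L.leaves ∪ R.leaves →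
        cutWeight w L.leaves R.leaves / ((L.leaves.card : ℝ) * (R.leaves.card : ℝ)) ≤
          φ * (cutWeight w S ((L.leaves ∪ R.leaves) \ S) /
            ((S.card : ℝ) * (((L.leaves ∪ R.leaves) \ S).card : ℝ)))) ∧
      IsRecApproxSparsestCutTree w φ L ∧ IsRecApproxSparsestCutTree w φ R

/-- Cluster trees obtained by recursively splitting along exact sparsest cuts. -/
def IsRecSparsestCutTree [DecidableEq V] (w : V → V → ℝ) : ClusterTree V → Prop
  | ClusterTree.leaf _ => True
  | ClusterTree.node L R =>
      (∀ S : Finset V, S ⊆ L.leaves ∪ R.leaves → S.Nonempty → S ⊂ L.leaves ∪ R.leaves →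
        cutWeight w L.leaves R.leaves / ((L.leaves.card : ℝ) * (R.leaves.card : ℝ)) ≤
          cutWeight w S ((L.leaves ∪ R.leaves) \ S) /
            ((S.card : ℝ) * (((L.leaves ∪ R.leaves) \ S).card : ℝ))) ∧
      IsRecSparsestCutTree w L ∧ IsRecSparsestCutTree w R

/-- Cluster trees obtained by recursively splitting along exact densest cuts. -/
def IsRecDensestCutTree [DecidableEq V] (w : V → V → ℝ) : ClusterTree V → Prop
  | ClusterTree.leaf _ => True
  | ClusterTree.node L R =>
      (∀ S : Finset V, S ⊆ L.leaves ∪ R.leaves → S.Nonempty → S ⊂ L.leaves ∪ R.leaves →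
        cutWeight w S ((L.leaves ∪ R.leaves) \ S) /
            ((S.card : ℝ) * (((L.leaves ∪ R.leaves) \ S).card : ℝ)) ≤
          cutWeight w L.leaves R.leaves / ((L.leaves.card : ℝ) * (R.leaves.card : ℝ))) ∧
      IsRecDensestCutTree w L ∧ IsRecDensestCutTree w R

/-- Cluster trees produced by the bisection 2-Center algorithm (similarity setting). -/
def IsBisection2CenterTree [DecidableEq V] (w : V → V → ℝ) : ClusterTree V → Prop
  | ClusterTree.leaf _ => True
  | ClusterTree.node L R =>
      (∃ u ∈ L.leaves ∪ R.leaves, ∃ v ∈ L.leaves ∪ R.leaves, u ≠ v ∧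
        (∃ r : ℝ,
          (∀ x ∈ L.leaves ∪ R.leaves, r ≤ max (w x u) (w x v)) ∧
          (∀ u' ∈ L.leaves ∪ R.leaves, ∀ v' ∈ L.leaves ∪ R.leaves, u' ≠ v' →
            ∃ x ∈ L.leaves ∪ R.leaves, max (w x u') (w x v') ≤ r)) ∧
        L.leaves = (L.leaves ∪ R.leaves).filter fun x => w x v ≤ w x u) ∧
      IsBisection2CenterTree w L ∧ IsBisection2CenterTree w R

/-- Cluster trees produced by the bisection 2-Center algorithm (dissimilarity setting). -/
def IsBisection2CenterTreeDissim [DecidableEq V] (w : V → V → ℝ) : ClusterTree V → Prop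
  | ClusterTree.leaf _ => True
  | ClusterTree.node L R =>
      (∃ u ∈ L.leaves ∪ R.leaves, ∃ v ∈ L.leaves ∪ R.leaves, u ≠ v ∧
        (∃ r : ℝ,
          (∀ x ∈ L.leaves ∪ R.leaves, min (w x u) (w x v) ≤ r) ∧
          (∀ u' ∈ L.leaves ∪ R.leaves, ∀ v' ∈ L.leaves ∪ R.leaves, u' ≠ v' →
            ∃ x ∈ L.leaves ∪ R.leaves, r ≤ min (w x u') (w x v'))) ∧
        L.leaves = (L.leaves ∪ R.leaves).filter fun x => w x u ≤ w x v) ∧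
      IsBisection2CenterTreeDissim w L ∧ IsBisection2CenterTreeDissim w R

end Cuts

/-! ### Pivot algorithms -/

mutual
/-- Trees produced by the fast pivot algorithm (Algorithm 6 of CKMM):
pick a pivot `p`, split the other vertices into classes of equal similarity to `p`
(in strictly decreasing order of similarity), recurse, and attach along a spine. -/
inductive IsPivotTree {V : Type} [DecidableEq V] (w : V → V → ℝ) : ClusterTree V → Prop where
  | mk : ∀ (p : V) (T : ClusterTree V), PivotSpine w p T → IsPivotTree w T

/-- The spine of the pivot algorithm: `PivotSpine w p T` says that `T` is an iterated
union of the single-vertex tree on `p` with pivot trees of the similarity classes of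
`p`, attached in strictly decreasing order of similarity to `p`. -/
inductive PivotSpine {V : Type} [DecidableEq V] (w : V → V → ℝ) : V → ClusterTree V → Prop where
  | base : ∀ p : V, PivotSpine w p (ClusterTree.leaf p)
  | step : ∀ (p : V) (S T : ClusterTree V) (c : ℝ),
      PivotSpine w p S → IsPivotTree w T →
      (∀ v ∈ T.leaves, w p v = c) →
      (∀ u ∈ S.leaves, u ≠ p → c < w p u) →
      PivotSpine w p (ClusterTree.node S T)
end

mutual
/-- Trees produced by the robust pivot algorithm (Algorithm 7 of CKMM). -/
inductive IsRobustPivotTree {V : Type} [DecidableEq V] (w : V → V → ℝ) :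
    ClusterTree V → Prop where
  | mk : ∀ (p : V) (T : ClusterTree V), RobustPivotSpine w T.leaves p T →
      IsRobustPivotTree w T

/-- `RobustPivotSpine w U p T` : `T` is a prefix (a spine) of a run of the robust pivot
algorithm on the vertex set `U`, started at the pivot `p`.  At each step, `wi` is the
maximum weight of an edge in the cut `(Ṽ, U \ Ṽ)` (where `Ṽ` is the set of already
clustered vertices), and the next block is the least subset of `U \ Ṽ` closed under
adding any vertex having an edge of weight at least `wi` into the block or into `Ṽ`. -/
inductive RobustPivotSpine {V : Type} [DecidableEq V] (w : V → V → ℝ) :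
    Finset V → V → ClusterTree V → Prop where
  | base : ∀ (U : Finset V) (p : V), RobustPivotSpine w U p (ClusterTree.leaf p)
  | step : ∀ (U : Finset V) (p : V) (S T : ClusterTree V) (wi : ℝ),
      RobustPivotSpine w U p S →
      IsRobustPivotTree w T →
      (∃ p1 ∈ S.leaves, ∃ p2 ∈ U \ S.leaves, w p1 p2 = wi) →
      (∀ q1 ∈ S.leaves, ∀ q2 ∈ U \ S.leaves, w q1 q2 ≤ wi) →
      T.leaves ⊆ U \ S.leaves →
      (∀ u ∈ U \ S.leaves, (∃ v ∈ T.leaves ∪ S.leaves, wi ≤ w u v) → u ∈ T.leaves) →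
      (∀ C : Finset V, C ⊆ U \ S.leaves →
        (∀ u ∈ U \ S.leaves, (∃ v ∈ C ∪ S.leaves, wi ≤ w u v) → u ∈ C) →
        T.leaves ⊆ C) →
      RobustPivotSpine w U p (ClusterTree.node S T)
end

/-! ### Paths and caterpillars -/

/-- Attach the leaves from the list `l` one by one on top of `t` (a "spine"). -/
def spineTree {V : Type} : ClusterTree V → List V → ClusterTree V
  | t, [] => t
  | t, v :: vs => spineTree (ClusterTree.node t (ClusterTree.leaf v)) vs

/-- The unit-weight path on `n` vertices. -/
def pathW (n : ℕ) (i j : Fin n) : ℝ :=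
  if (i : ℕ) + 1 = (j : ℕ) ∨ (j : ℕ) + 1 = (i : ℕ) then 1 else 0

/-! ### Random graphs: hierarchical stochastic block model -/

/-- Index set for the potential edges of a graph on `Fin n`. -/
abbrev EdgeIdx (n : ℕ) := {p : Fin n × Fin n // p.1 < p.2}

/-- The (0/1) weight function of the random graph described by the edge
configuration `c`. -/
def configW {n : ℕ} (c : EdgeIdx n → Bool) (u v : Fin n) : ℝ :=
  if h : u < v then (if c ⟨(u, v), h⟩ then 1 else 0)
  else if h' : v < u then (if c ⟨(v, u), h'⟩ then 1 else 0)
  else 0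

/-- The probability of the edge configuration `c` when each edge `e` is present
independently with probability `q e`. -/
def configProb {n : ℕ} (q : Fin n → Fin n → ℝ) (c : EdgeIdx n → Bool) : ℝ :=
  ∏ e : EdgeIdx n, if c e then q e.val.1 e.val.2 else 1 - q e.val.1 e.val.2

/-- The expected cost `E[Γ(T) | ψ]` of a fixed cluster tree `T`, over the random
choice of the edges (with edge probabilities `q`). -/
def expectedCost {n : ℕ} (g : ℕ → ℕ → ℝ) (q : Fin n → Fin n → ℝ)
    (T : ClusterTree (Fin n)) : ℝ :=
  ∑ c : EdgeIdx n → Bool, configProb q c * treeCost (configW c) g T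

/-- The (fixed, size-independent) data of a hierarchical stochastic block model with
`k` bottom-level clusters: a generating tree `Ttil` with weights `Wtil` in `(0,1)`
(the graph `G̃ₖ` on `k` vertices generated from an ultrametric), and intra-cluster
probabilities `p i ∈ (0,1]` exceeding the weight of the parent of leaf `i`. -/
structure HSBM (k : ℕ) where
  Ttil : ClusterTree (Fin k)
  Wtil : ClusterTree (Fin k) → ℝ
  p : Fin k → ℝ
  ttil_isClusterTree : IsClusterTree Ttil
  wtil_pos : ∀ L R, IsSubtreeOf (ClusterTree.node L R) Ttil →
    0 < Wtil (ClusterTree.node L R)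
  wtil_lt_one : ∀ L R, IsSubtreeOf (ClusterTree.node L R) Ttil →
    Wtil (ClusterTree.node L R) < 1
  wtil_mono : ∀ L R, IsSubtreeOf (ClusterTree.node L R) Ttil →
    ∀ s, IsSubtreeOf s L ∨ IsSubtreeOf s R → Wtil (ClusterTree.node L R) ≤ Wtil s
  p_pos : ∀ i, 0 < p i
  p_le_one : ∀ i, p i ≤ 1
  p_gt_parent : ∀ L R, IsSubtreeOf (ClusterTree.node L R) Ttil →
    ∀ i : Fin k, L = ClusterTree.leaf i ∨ R = ClusterTree.leaf i →
      Wtil (ClusterTree.node L R) < p i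

/-- The edge probabilities of the HSBM `M` with sparsity `α`, given the assignment
`ψ` of vertices to bottom-level clusters.  These are also the edge weights of the
expected graph `Ḡ`. -/
def HSBM.edgeProb {k : ℕ} (M : HSBM k) (α : ℝ) {n : ℕ} (ψ : Fin n → Fin k) :
    Fin n → Fin n → ℝ := fun u v =>
  if ψ u = ψ v then α * M.p (ψ u)
  else α * M.Wtil (lcaSubtree M.Ttil (ψ u) (ψ v))

/-- The probability of the sample `ω = (ψ, c)` (labels and edges) of the HSBM `M`
with label proportions `f` and sparsity `α`. -/
def hsbmProb {k : ℕ} (M : HSBM k) (f : Fin k → ℝ) (α : ℝ) {n : ℕ}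
    (ω : (Fin n → Fin k) × (EdgeIdx n → Bool)) : ℝ :=
  (∏ v : Fin n, f (ω.1 v)) * configProb (M.edgeProb α ω.1) ω.2

/-- The common cost `κ(n)` of all cluster trees of the unit-weight clique on `n`
vertices (computed on the caterpillar tree). -/
def cliqueTreeCost (g : ℕ → ℕ → ℝ) (n : ℕ) : ℝ :=
  ∑ i ∈ Finset.range n, (i : ℝ) * g i 1

/-- The smoothness property: `max {g(n₁,n₂) : n₁+n₂ = n} = O(κ(n)/n²)`. -/
def SmoothCost (g : ℕ → ℕ → ℝ) : Prop :=
  ∃ C : ℝ, 0 < C ∧ ∀ n1 n2 : ℕ, 1 ≤ n1 → 1 ≤ n2 →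
    g n1 n2 * (((n1 + n2 : ℕ) : ℝ)) ^ 2 ≤ C * cliqueTreeCost g (n1 + n2)

/-! ### Auxiliary lemmas for Statement 12 -/

section Statement12Aux

variable {V : Type}

open ClusterTree

lemma leavesList_ne_nil' (T : ClusterTree V) : T.leavesList ≠ [] := by
  induction T with
  | leaf v => simp [ClusterTree.leavesList]
  | node L R ihL ihR =>
    simp only [ClusterTree.leavesList]
    simp [List.append_eq_nil_iff]
    tauto

lemma leaves_node' [DecidableEq V] (L R : ClusterTree V) :
    (ClusterTree.node L R).leaves = L.leaves ∪ R.leaves := by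
  simp [ClusterTree.leaves, ClusterTree.leavesList, List.toFinset_append]

lemma leaves_nonempty' [DecidableEq V] (T : ClusterTree V) : T.leaves.Nonempty := by
  rw [ClusterTree.leaves, List.toFinset_nonempty_iff]
  exact leavesList_ne_nil' T

lemma subtree_refl' (t : ClusterTree V) : IsSubtreeOf t t := by
  cases t <;> simp [IsSubtreeOf]

lemma subtree_trans' {a b c : ClusterTree V} (hab : IsSubtreeOf a b)
    (hbc : IsSubtreeOf b c) : IsSubtreeOf a c := by
  induction c with
  | leaf v => rw [IsSubtreeOf] at hbc; subst hbc; exact hab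
  | node L R ihL ihR =>
    rw [IsSubtreeOf] at hbc ⊢
    rcases hbc with rfl | h | h
    · rw [IsSubtreeOf] at hab; exact hab
    · exact Or.inr (Or.inl (ihL h))
    · exact Or.inr (Or.inr (ihR h))

lemma subtree_left' {L R : ClusterTree V} : IsSubtreeOf L (ClusterTree.node L R) :=
  Or.inr (Or.inl (subtree_refl' L))

lemma subtree_right' {L R : ClusterTree V} : IsSubtreeOf R (ClusterTree.node L R) :=
  Or.inr (Or.inr (subtree_refl' R))

lemma nodup_subtree' {s T : ClusterTree V} (h : IsSubtreeOf s T)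
    (hT : T.leavesList.Nodup) : s.leavesList.Nodup := by
  induction T with
  | leaf v => rw [IsSubtreeOf] at h; subst h; exact hT
  | node L R ihL ihR =>
    rw [IsSubtreeOf] at h
    rw [ClusterTree.leavesList, List.nodup_append] at hT
    rcases h with rfl | h | h
    · rw [ClusterTree.leavesList, List.nodup_append]; exact hT
    · exact ihL h hT.1
    · exact ihR h hT.2.1

lemma leaves_subset' [DecidableEq V] {s T : ClusterTree V} (h : IsSubtreeOf s T) :
    s.leaves ⊆ T.leaves := by
  induction T with
  | leaf v => rw [IsSubtreeOf] at h; subst h; exact subset_rfl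
  | node L R ihL ihR =>
    rw [IsSubtreeOf] at h
    rcases h with rfl | h | h
    · exact subset_rfl
    · exact (ihL h).trans (by rw [leaves_node']; exact Finset.subset_union_left)
    · exact (ihR h).trans (by rw [leaves_node']; exact Finset.subset_union_right)

lemma node_disjoint' [DecidableEq V] {L R : ClusterTree V}
    (hnd : (ClusterTree.node L R).leavesList.Nodup) :
    ∀ a ∈ L.leaves, a ∉ R.leaves := by
  rw [ClusterTree.leavesList, List.nodup_append] at hnd
  intro a haL haR
  exact hnd.2.2 a ((List.mem_toFinset).mp haL) a ((List.mem_toFinset).mp haR) rfl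

lemma lca_spec' [DecidableEq V] (T : ClusterTree V) (hT : T.leavesList.Nodup) {x y : V}
    (hx : x ∈ T.leaves) (hy : y ∈ T.leaves) (hxy : x ≠ y) :
    ∃ L R : ClusterTree V, lcaSubtree T x y = ClusterTree.node L R ∧
      IsSubtreeOf (ClusterTree.node L R) T ∧
      ((x ∈ L.leaves ∧ y ∈ R.leaves) ∨ (y ∈ L.leaves ∧ x ∈ R.leaves)) := by
  induction T with
  | leaf v =>
    simp [ClusterTree.leaves, ClusterTree.leavesList] at hx hy
    exact absurd (hx.trans hy.symm) hxy
  | node L R ihL ihR =>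
    have hndL : L.leavesList.Nodup := nodup_subtree' subtree_left' hT
    have hndR : R.leavesList.Nodup := nodup_subtree' subtree_right' hT
    rw [lcaSubtree]
    by_cases h1 : x ∈ L.leaves ∧ y ∈ L.leaves
    · rw [if_pos h1]
      obtain ⟨L', R', heq, hsub, hcr⟩ := ihL hndL h1.1 h1.2
      exact ⟨L', R', heq, subtree_trans' hsub subtree_left', hcr⟩
    · rw [if_neg h1]
      by_cases h2 : x ∈ R.leaves ∧ y ∈ R.leaves
      · rw [if_pos h2]
        obtain ⟨L', R', heq, hsub, hcr⟩ := ihR hndR h2.1 h2.2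
        exact ⟨L', R', heq, subtree_trans' hsub subtree_right', hcr⟩
      · rw [if_neg h2]
        refine ⟨L, R, rfl, Or.inl rfl, ?_⟩
        rw [leaves_node', Finset.mem_union] at hx hy
        rcases hx with hxL | hxR
        · rcases hy with hyL | hyR
          · exact absurd ⟨hxL, hyL⟩ h1
          · exact Or.inl ⟨hxL, hyR⟩
        · rcases hy with hyL | hyR
          · exact Or.inr ⟨hyL, hxR⟩
          · exact absurd ⟨hxR, hyR⟩ h2

/-! #### Extremal pair weights -/

/-- The minimum weight over distinct pairs of `A` (or `0` if there are none). -/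
def minPairW [DecidableEq V] (w : V → V → ℝ) (A : Finset V) : ℝ :=
  ((A.offDiag.image fun p => w p.1 p.2).min).untopD 0

/-- The maximum weight over distinct pairs of `A` (or `0` if there are none). -/
def maxPairW [DecidableEq V] (w : V → V → ℝ) (A : Finset V) : ℝ :=
  ((A.offDiag.image fun p => w p.1 p.2).max).unbotD 0

lemma minPairW_le [DecidableEq V] (w : V → V → ℝ) {A : Finset V} {x y : V}
    (hx : x ∈ A) (hy : y ∈ A) (hxy : x ≠ y) : minPairW w A ≤ w x y := by
  have hmem : w x y ∈ A.offDiag.image fun p => w p.1 p.2 :=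
    Finset.mem_image.mpr ⟨(x, y), Finset.mem_offDiag.mpr ⟨hx, hy, hxy⟩, rfl⟩
  have hne : (A.offDiag.image fun p => w p.1 p.2).Nonempty := ⟨_, hmem⟩
  rw [minPairW, ← Finset.coe_min' hne, WithTop.untopD_coe]
  exact Finset.min'_le _ _ hmem

lemma le_maxPairW [DecidableEq V] (w : V → V → ℝ) {A : Finset V} {x y : V}
    (hx : x ∈ A) (hy : y ∈ A) (hxy : x ≠ y) : w x y ≤ maxPairW w A := by
  have hmem : w x y ∈ A.offDiag.image fun p => w p.1 p.2 :=
    Finset.mem_image.mpr ⟨(x, y), Finset.mem_offDiag.mpr ⟨hx, hy, hxy⟩, rfl⟩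
  have hne : (A.offDiag.image fun p => w p.1 p.2).Nonempty := ⟨_, hmem⟩
  rw [maxPairW, ← Finset.coe_max' hne, WithBot.unbotD_coe]
  exact Finset.le_max' _ _ hmem

lemma minPairW_mem [DecidableEq V] (w : V → V → ℝ) {A : Finset V}
    (h : A.offDiag.Nonempty) :
    ∃ x ∈ A, ∃ y ∈ A, x ≠ y ∧ minPairW w A = w x y := by
  have hne : (A.offDiag.image fun p => w p.1 p.2).Nonempty := h.image _
  have hmem := Finset.min'_mem _ hne
  rw [Finset.mem_image] at hmem
  obtain ⟨p, hp, hval⟩ := hmem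
  rw [Finset.mem_offDiag] at hp
  refine ⟨p.1, hp.1, p.2, hp.2.1, hp.2.2, ?_⟩
  rw [minPairW, ← Finset.coe_min' hne, WithTop.untopD_coe, hval]

lemma maxPairW_mem [DecidableEq V] (w : V → V → ℝ) {A : Finset V}
    (h : A.offDiag.Nonempty) :
    ∃ x ∈ A, ∃ y ∈ A, x ≠ y ∧ maxPairW w A = w x y := by
  have hne : (A.offDiag.image fun p => w p.1 p.2).Nonempty := h.image _
  have hmem := Finset.max'_mem _ hne
  rw [Finset.mem_image] at hmem
  obtain ⟨p, hp, hval⟩ := hmem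
  rw [Finset.mem_offDiag] at hp
  refine ⟨p.1, hp.1, p.2, hp.2.1, hp.2.2, ?_⟩
  rw [maxPairW, ← Finset.coe_max' hne, WithBot.unbotD_coe, hval]

lemma minPairW_mono [DecidableEq V] (w : V → V → ℝ) {A B : Finset V}
    (hBA : B ⊆ A) (h : B.offDiag.Nonempty) : minPairW w A ≤ minPairW w B := by
  obtain ⟨x, hx, y, hy, hxy, heq⟩ := minPairW_mem w h
  rw [heq]
  exact minPairW_le w (hBA hx) (hBA hy) hxy

lemma maxPairW_mono [DecidableEq V] (w : V → V → ℝ) {A B : Finset V}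
    (hBA : B ⊆ A) (h : B.offDiag.Nonempty) : maxPairW w B ≤ maxPairW w A := by
  obtain ⟨x, hx, y, hy, hxy, heq⟩ := maxPairW_mem w h
  rw [heq]
  exact le_maxPairW w (hBA hx) (hBA hy) hxy

lemma minPairW_nonneg [DecidableEq V] (w : V → V → ℝ)
    (hnn : ∀ x y : V, x ≠ y → 0 ≤ w x y) (A : Finset V) : 0 ≤ minPairW w A := by
  by_cases h : A.offDiag.Nonempty
  · obtain ⟨x, _, y, _, hxy, heq⟩ := minPairW_mem w h
    rw [heq]; exact hnn x y hxy
  · rw [Finset.not_nonempty_iff_eq_empty] at h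
    simp [minPairW, h]

lemma maxPairW_nonneg [DecidableEq V] (w : V → V → ℝ)
    (hnn : ∀ x y : V, x ≠ y → 0 ≤ w x y) (A : Finset V) : 0 ≤ maxPairW w A := by
  by_cases h : A.offDiag.Nonempty
  · obtain ⟨x, _, y, _, hxy, heq⟩ := maxPairW_mem w h
    rw [heq]; exact hnn x y hxy
  · rw [Finset.not_nonempty_iff_eq_empty] at h
    simp [maxPairW, h]

lemma sum_all_eq_of_le {ι : Type*} (s : Finset ι) (f : ι → ℝ) (m : ℝ)
    (h : ∀ i ∈ s, m ≤ f i) (h2 : ∑ i ∈ s, f i ≤ (s.card : ℝ) * m) :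
    ∀ i ∈ s, f i = m := by
  have h4 : ∑ i ∈ s, (f i - m) = 0 := by
    refine le_antisymm ?_ (Finset.sum_nonneg fun i hi => by linarith [h i hi])
    rw [Finset.sum_sub_distrib, Finset.sum_const, nsmul_eq_mul]
    linarith
  intro i hi
  have := (Finset.sum_eq_zero_iff_of_nonneg (fun i hi => by linarith [h i hi])).mp h4 i hi
  linarith

lemma sum_all_eq_of_ge {ι : Type*} (s : Finset ι) (f : ι → ℝ) (m : ℝ)
    (h : ∀ i ∈ s, f i ≤ m) (h2 : (s.card : ℝ) * m ≤ ∑ i ∈ s, f i) :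
    ∀ i ∈ s, f i = m := by
  have h4 : ∑ i ∈ s, (m - f i) = 0 := by
    refine le_antisymm ?_ (Finset.sum_nonneg fun i hi => by linarith [h i hi])
    rw [Finset.sum_sub_distrib, Finset.sum_const, nsmul_eq_mul]
    linarith
  intro i hi
  have := (Finset.sum_eq_zero_iff_of_nonneg (fun i hi => by linarith [h i hi])).mp h4 i hi
  linarith

lemma cutWeight_eq_sum_product [DecidableEq V] (w : V → V → ℝ) (A B : Finset V) :
    cutWeight w A B = ∑ p ∈ A ×ˢ B, w p.1 p.2 := by
  rw [cutWeight, Finset.sum_product]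

/-! #### Cross edges at a sparsest (densest) cut are all equal -/

lemma cross_eq_sim [DecidableEq V] (w : V → V → ℝ)
    (hsym : ∀ x y : V, x ≠ y → w x y = w y x)
    (hmin : ∀ x y z : V, x ≠ y → x ≠ z → y ≠ z → min (w x z) (w y z) ≤ w x y)
    {A B : Finset V} (hA : A.Nonempty) (hB : B.Nonempty) (hdisj : Disjoint A B)
    (hsc : ∀ S : Finset V, S ⊆ A ∪ B → S.Nonempty → S ⊂ A ∪ B →
      cutWeight w A B / ((A.card : ℝ) * (B.card : ℝ)) ≤
        cutWeight w S ((A ∪ B) \ S) /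
          ((S.card : ℝ) * ((((A ∪ B) \ S).card : ℝ)))) :
    ∀ x ∈ A, ∀ y ∈ B, w x y = minPairW w (A ∪ B) := by
  set U := A ∪ B with hU
  have hUod : U.offDiag.Nonempty := by
    obtain ⟨x0, hx0⟩ := hA; obtain ⟨y0, hy0⟩ := hB
    refine ⟨(x0, y0), Finset.mem_offDiag.mpr ⟨Finset.mem_union_left _ hx0,
      Finset.mem_union_right _ hy0, ?_⟩⟩
    intro h
    exact Finset.disjoint_left.mp hdisj hx0 (by rw [show x0 = y0 from h]; exact hy0)
  set m := minPairW w U with hmdef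
  obtain ⟨a, ha, b, hb, hab, hm⟩ := minPairW_mem w hUod
  set S := U.filter (fun z => z = a ∨ m < w a z) with hSdef
  have hSsub : S ⊆ U := Finset.filter_subset _ _
  have haS : a ∈ S := Finset.mem_filter.mpr ⟨ha, Or.inl rfl⟩
  have hbS : b ∉ S := by
    intro hbS
    rcases (Finset.mem_filter.mp hbS).2 with h | h
    · exact hab h.symm
    · rw [← hm] at h; exact lt_irrefl _ h
  have hSss : S ⊂ U := Finset.ssubset_iff_of_subset hSsub |>.mpr ⟨b, hb, hbS⟩
  have hcr : ∀ x ∈ S, ∀ y ∈ U \ S, w x y = m := by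
    intro x hxS y hyD
    obtain ⟨hyU, hyS⟩ := Finset.mem_sdiff.mp hyD
    have hxy : x ≠ y := by rintro rfl; exact hyS hxS
    have hya : y ≠ a := by rintro rfl; exact hyS haS
    have hay : w a y ≤ m := by
      by_contra hlt
      exact hyS (Finset.mem_filter.mpr ⟨hyU, Or.inr (lt_of_not_ge hlt)⟩)
    have hay' : w a y = m :=
      le_antisymm hay (minPairW_le w ha hyU (Ne.symm hya))
    by_cases hxa : x = a
    · rw [hxa]; exact hay'
    · have hx2 : m < w a x := by
        rcases (Finset.mem_filter.mp hxS).2 with h | h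
        · exact absurd h hxa
        · exact h
      have hxU := hSsub hxS
      have h3 : min (w a x) (w y x) ≤ w a y :=
        hmin a y x (Ne.symm hya) (fun h => hxa h.symm) (fun h => hxy h.symm)
      rw [hay'] at h3
      have h4 : w y x ≤ m := by
        rcases min_le_iff.mp h3 with h | h
        · exact absurd h (not_le.mpr hx2)
        · exact h
      have h5 : m ≤ w y x := minPairW_le w hyU hxU (Ne.symm hxy)
      rw [hsym x y hxy]
      exact le_antisymm h4 h5
  have hScard : (0:ℝ) < S.card := by exact_mod_cast Finset.card_pos.mpr ⟨a, haS⟩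
  have hDcard : (0:ℝ) < ((U \ S).card : ℝ) := by
    exact_mod_cast Finset.card_pos.mpr ⟨b, Finset.mem_sdiff.mpr ⟨hb, hbS⟩⟩
  have hcutS : cutWeight w S (U \ S) = (S.card : ℝ) * ((U \ S).card : ℝ) * m := by
    have hcg : ∑ p ∈ S ×ˢ (U \ S), w p.1 p.2 = ∑ _p ∈ S ×ˢ (U \ S), m :=
      Finset.sum_congr rfl (fun p hp => by
        rw [Finset.mem_product] at hp; exact hcr p.1 hp.1 p.2 hp.2)
    rw [cutWeight_eq_sum_product, hcg, Finset.sum_const, Finset.card_product, nsmul_eq_mul]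
    push_cast; ring
  have hsparS : cutWeight w S (U \ S) / ((S.card : ℝ) * ((U \ S).card : ℝ)) = m := by
    rw [hcutS, mul_div_cancel_left₀]
    exact ne_of_gt (mul_pos hScard hDcard)
  have hACard : (0:ℝ) < (A.card : ℝ) := by exact_mod_cast Finset.card_pos.mpr hA
  have hBCard : (0:ℝ) < (B.card : ℝ) := by exact_mod_cast Finset.card_pos.mpr hB
  have hle : cutWeight w A B / ((A.card : ℝ) * (B.card : ℝ)) ≤ m := by
    have := hsc S hSsub ⟨a, haS⟩ hSss
    rwa [hsparS] at this
  have hcutAB : cutWeight w A B ≤ (A.card : ℝ) * (B.card : ℝ) * m := by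
    rw [div_le_iff₀ (mul_pos hACard hBCard)] at hle
    linarith [hle]
  have hterm : ∀ p ∈ A ×ˢ B, m ≤ w p.1 p.2 := by
    intro p hp
    rw [Finset.mem_product] at hp
    refine minPairW_le w (Finset.mem_union_left _ hp.1) (Finset.mem_union_right _ hp.2) ?_
    intro h
    exact Finset.disjoint_left.mp hdisj hp.1 (by rw [h]; exact hp.2)
  have hall := sum_all_eq_of_le (A ×ˢ B) (fun p => w p.1 p.2) m hterm (by
    rw [← cutWeight_eq_sum_product, Finset.card_product]
    push_cast
    linarith [hcutAB])
  intro x hx y hy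
  exact hall (x, y) (Finset.mem_product.mpr ⟨hx, hy⟩)

lemma cross_eq_dissim [DecidableEq V] (w : V → V → ℝ)
    (hsym : ∀ x y : V, x ≠ y → w x y = w y x)
    (hmax : ∀ x y z : V, x ≠ y → x ≠ z → y ≠ z → w x y ≤ max (w x z) (w y z))
    {A B : Finset V} (hA : A.Nonempty) (hB : B.Nonempty) (hdisj : Disjoint A B)
    (hsc : ∀ S : Finset V, S ⊆ A ∪ B → S.Nonempty → S ⊂ A ∪ B →
      cutWeight w S ((A ∪ B) \ S) /
          ((S.card : ℝ) * ((((A ∪ B) \ S).card : ℝ))) ≤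
        cutWeight w A B / ((A.card : ℝ) * (B.card : ℝ))) :
    ∀ x ∈ A, ∀ y ∈ B, w x y = maxPairW w (A ∪ B) := by
  set U := A ∪ B with hU
  have hUod : U.offDiag.Nonempty := by
    obtain ⟨x0, hx0⟩ := hA; obtain ⟨y0, hy0⟩ := hB
    refine ⟨(x0, y0), Finset.mem_offDiag.mpr ⟨Finset.mem_union_left _ hx0,
      Finset.mem_union_right _ hy0, ?_⟩⟩
    intro h
    exact Finset.disjoint_left.mp hdisj hx0 (by rw [show x0 = y0 from h]; exact hy0)
  set m := maxPairW w U with hmdef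
  obtain ⟨a, ha, b, hb, hab, hm⟩ := maxPairW_mem w hUod
  set S := U.filter (fun z => z = a ∨ w a z < m) with hSdef
  have hSsub : S ⊆ U := Finset.filter_subset _ _
  have haS : a ∈ S := Finset.mem_filter.mpr ⟨ha, Or.inl rfl⟩
  have hbS : b ∉ S := by
    intro hbS
    rcases (Finset.mem_filter.mp hbS).2 with h | h
    · exact hab h.symm
    · rw [← hm] at h; exact lt_irrefl _ h
  have hSss : S ⊂ U := Finset.ssubset_iff_of_subset hSsub |>.mpr ⟨b, hb, hbS⟩
  have hcr : ∀ x ∈ S, ∀ y ∈ U \ S, w x y = m := by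
    intro x hxS y hyD
    obtain ⟨hyU, hyS⟩ := Finset.mem_sdiff.mp hyD
    have hxy : x ≠ y := by rintro rfl; exact hyS hxS
    have hya : y ≠ a := by rintro rfl; exact hyS haS
    have hay : m ≤ w a y := by
      by_contra hlt
      exact hyS (Finset.mem_filter.mpr ⟨hyU, Or.inr (lt_of_not_ge hlt)⟩)
    have hay' : w a y = m :=
      le_antisymm (le_maxPairW w ha hyU (Ne.symm hya)) hay
    by_cases hxa : x = a
    · rw [hxa]; exact hay'
    · have hx2 : w a x < m := by
        rcases (Finset.mem_filter.mp hxS).2 with h | h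
        · exact absurd h hxa
        · exact h
      have hxU := hSsub hxS
      have h3 : w a y ≤ max (w a x) (w y x) :=
        hmax a y x (Ne.symm hya) (fun h => hxa h.symm) (fun h => hxy h.symm)
      rw [hay'] at h3
      have h4 : m ≤ w y x := by
        rcases le_max_iff.mp h3 with h | h
        · exact absurd h (not_le.mpr hx2)
        · exact h
      have h5 : w y x ≤ m := le_maxPairW w hyU hxU (Ne.symm hxy)
      rw [hsym x y hxy]
      exact le_antisymm h5 h4
  have hScard : (0:ℝ) < S.card := by exact_mod_cast Finset.card_pos.mpr ⟨a, haS⟩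
  have hDcard : (0:ℝ) < ((U \ S).card : ℝ) := by
    exact_mod_cast Finset.card_pos.mpr ⟨b, Finset.mem_sdiff.mpr ⟨hb, hbS⟩⟩
  have hcutS : cutWeight w S (U \ S) = (S.card : ℝ) * ((U \ S).card : ℝ) * m := by
    have hcg : ∑ p ∈ S ×ˢ (U \ S), w p.1 p.2 = ∑ _p ∈ S ×ˢ (U \ S), m :=
      Finset.sum_congr rfl (fun p hp => by
        rw [Finset.mem_product] at hp; exact hcr p.1 hp.1 p.2 hp.2)
    rw [cutWeight_eq_sum_product, hcg, Finset.sum_const, Finset.card_product, nsmul_eq_mul]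
    push_cast; ring
  have hsparS : cutWeight w S (U \ S) / ((S.card : ℝ) * ((U \ S).card : ℝ)) = m := by
    rw [hcutS, mul_div_cancel_left₀]
    exact ne_of_gt (mul_pos hScard hDcard)
  have hACard : (0:ℝ) < (A.card : ℝ) := by exact_mod_cast Finset.card_pos.mpr hA
  have hBCard : (0:ℝ) < (B.card : ℝ) := by exact_mod_cast Finset.card_pos.mpr hB
  have hle : m ≤ cutWeight w A B / ((A.card : ℝ) * (B.card : ℝ)) := by
    have := hsc S hSsub ⟨a, haS⟩ hSss
    rwa [hsparS] at this
  have hcutAB : (A.card : ℝ) * (B.card : ℝ) * m ≤ cutWeight w A B := by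
    rw [le_div_iff₀ (mul_pos hACard hBCard)] at hle
    linarith [hle]
  have hterm : ∀ p ∈ A ×ˢ B, w p.1 p.2 ≤ m := by
    intro p hp
    rw [Finset.mem_product] at hp
    refine le_maxPairW w (Finset.mem_union_left _ hp.1) (Finset.mem_union_right _ hp.2) ?_
    intro h
    exact Finset.disjoint_left.mp hdisj hp.1 (by rw [h]; exact hp.2)
  have hall := sum_all_eq_of_ge (A ×ˢ B) (fun p => w p.1 p.2) m hterm (by
    rw [← cutWeight_eq_sum_product, Finset.card_product]
    push_cast
    linarith [hcutAB])
  intro x hx y hy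
  exact hall (x, y) (Finset.mem_product.mpr ⟨hx, hy⟩)

end Statement12Aux
section Statement12Aux2

variable {V : Type}

open ClusterTree

lemma recSC_subtree [DecidableEq V] {w : V → V → ℝ} {T s : ClusterTree V}
    (hT : IsRecSparsestCutTree w T) (h : IsSubtreeOf s T) :
    IsRecSparsestCutTree w s := by
  induction T with
  | leaf v => rw [IsSubtreeOf] at h; subst h; trivial
  | node L R ihL ihR =>
    rw [IsSubtreeOf] at h
    simp only [IsRecSparsestCutTree] at hT
    rcases h with rfl | h | h
    · simp only [IsRecSparsestCutTree]; exact hT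
    · exact ihL hT.2.1 h
    · exact ihR hT.2.2 h

lemma recDC_subtree [DecidableEq V] {w : V → V → ℝ} {T s : ClusterTree V}
    (hT : IsRecDensestCutTree w T) (h : IsSubtreeOf s T) :
    IsRecDensestCutTree w s := by
  induction T with
  | leaf v => rw [IsSubtreeOf] at h; subst h; trivial
  | node L R ihL ihR =>
    rw [IsSubtreeOf] at h
    simp only [IsRecDensestCutTree] at hT
    rcases h with rfl | h | h
    · simp only [IsRecDensestCutTree]; exact hT
    · exact ihL hT.2.1 h
    · exact ihR hT.2.2 h

/-- The node-weight function witnessing that a recursive sparsest-cut tree is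
generating. -/
def Wsim [DecidableEq V] [Fintype V] (w : V → V → ℝ) : ClusterTree V → ℝ
  | ClusterTree.leaf _ => maxPairW w (Finset.univ : Finset V)
  | ClusterTree.node L R => minPairW w (L.leaves ∪ R.leaves)

/-- Dissimilarity analogue of `Wsim`. -/
def Wdis [DecidableEq V] [Fintype V] (w : V → V → ℝ) : ClusterTree V → ℝ
  | ClusterTree.leaf _ => minPairW w (Finset.univ : Finset V)
  | ClusterTree.node L R => maxPairW w (L.leaves ∪ R.leaves)

lemma node_offDiag_nonempty [DecidableEq V] {L R : ClusterTree V}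
    (hnd : (ClusterTree.node L R).leavesList.Nodup) :
    (L.leaves ∪ R.leaves).offDiag.Nonempty := by
  obtain ⟨x, hx⟩ := leaves_nonempty' L
  obtain ⟨y, hy⟩ := leaves_nonempty' R
  refine ⟨(x, y), Finset.mem_offDiag.mpr ⟨Finset.mem_union_left _ hx,
    Finset.mem_union_right _ hy, ?_⟩⟩
  intro h
  exact node_disjoint' hnd x hx (by rw [show x = y from h]; exact hy)

lemma generating_of_recSC [Fintype V] [DecidableEq V] (w : V → V → ℝ)
    (hsym : ∀ x y : V, x ≠ y → w x y = w y x)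
    (hnn : ∀ x y : V, x ≠ y → 0 ≤ w x y)
    (hmin : ∀ x y z : V, x ≠ y → x ≠ z → y ≠ z → min (w x z) (w y z) ≤ w x y)
    (T : ClusterTree V) (hnd : T.leavesList.Nodup)
    (hrec : IsRecSparsestCutTree w T) : IsGenerating w T := by
  have keyA : ∀ L R : ClusterTree V, IsSubtreeOf (ClusterTree.node L R) T →
      (L.leaves ∪ R.leaves).offDiag.Nonempty := fun L R hsub =>
    node_offDiag_nonempty (nodup_subtree' hsub hnd)
  have keyC : ∀ L R : ClusterTree V, IsSubtreeOf (ClusterTree.node L R) T →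
      ∀ x ∈ L.leaves, ∀ y ∈ R.leaves, w x y = minPairW w (L.leaves ∪ R.leaves) := by
    intro L R hsub
    have hnd2 := nodup_subtree' hsub hnd
    have hrec2 := recSC_subtree hrec hsub
    simp only [IsRecSparsestCutTree] at hrec2
    exact cross_eq_sim w hsym hmin (leaves_nonempty' L) (leaves_nonempty' R)
      (Finset.disjoint_left.mpr (node_disjoint' hnd2)) hrec2.1
  refine ⟨Wsim w, ?_, ?_, ?_⟩
  · intro s hs
    cases s with
    | leaf v =>
      simp only [Wsim]
      exact maxPairW_nonneg w hnn _
    | node L R =>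
      simp only [Wsim]
      exact minPairW_nonneg w hnn _
  · intro L R hsub s hs
    have hsub' : IsSubtreeOf s (ClusterTree.node L R) := by
      rcases hs with h | h
      · exact subtree_trans' h subtree_left'
      · exact subtree_trans' h subtree_right'
    cases s with
    | leaf v =>
      simp only [Wsim]
      obtain ⟨x, hx, y, hy, hxy, heq⟩ := minPairW_mem w (keyA L R hsub)
      rw [heq]
      exact le_maxPairW w (Finset.mem_univ x) (Finset.mem_univ y) hxy
    | node L' R' =>
      simp only [Wsim]
      have hsubT : IsSubtreeOf (ClusterTree.node L' R') T := subtree_trans' hsub' hsub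
      have hsubset : L'.leaves ∪ R'.leaves ⊆ L.leaves ∪ R.leaves := by
        have := leaves_subset' hsub'
        rwa [leaves_node', leaves_node'] at this
      exact minPairW_mono w hsubset (keyA L' R' hsubT)
  · intro x y hx hy hxy
    obtain ⟨L', R', heq, hsub, hcr⟩ := lca_spec' T hnd hx hy hxy
    rw [heq]
    simp only [Wsim]
    rcases hcr with ⟨hxL, hyR⟩ | ⟨hyL, hxR⟩
    · exact keyC L' R' hsub x hxL y hyR
    · rw [hsym x y hxy]
      exact keyC L' R' hsub y hyL x hxR

lemma generating_of_recDC [Fintype V] [DecidableEq V] (w : V → V → ℝ)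
    (hsym : ∀ x y : V, x ≠ y → w x y = w y x)
    (hnn : ∀ x y : V, x ≠ y → 0 ≤ w x y)
    (hmax : ∀ x y z : V, x ≠ y → x ≠ z → y ≠ z → w x y ≤ max (w x z) (w y z))
    (T : ClusterTree V) (hnd : T.leavesList.Nodup)
    (hrec : IsRecDensestCutTree w T) : IsGeneratingDissim w T := by
  have keyA : ∀ L R : ClusterTree V, IsSubtreeOf (ClusterTree.node L R) T →
      (L.leaves ∪ R.leaves).offDiag.Nonempty := fun L R hsub =>
    node_offDiag_nonempty (nodup_subtree' hsub hnd)
  have keyC : ∀ L R : ClusterTree V, IsSubtreeOf (ClusterTree.node L R) T →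
      ∀ x ∈ L.leaves, ∀ y ∈ R.leaves, w x y = maxPairW w (L.leaves ∪ R.leaves) := by
    intro L R hsub
    have hnd2 := nodup_subtree' hsub hnd
    have hrec2 := recDC_subtree hrec hsub
    simp only [IsRecDensestCutTree] at hrec2
    exact cross_eq_dissim w hsym hmax (leaves_nonempty' L) (leaves_nonempty' R)
      (Finset.disjoint_left.mpr (node_disjoint' hnd2)) hrec2.1
  refine ⟨Wdis w, ?_, ?_, ?_⟩
  · intro s hs
    cases s with
    | leaf v =>
      simp only [Wdis]
      exact minPairW_nonneg w hnn _
    | node L R =>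
      simp only [Wdis]
      exact maxPairW_nonneg w hnn _
  · intro L R hsub s hs
    have hsub' : IsSubtreeOf s (ClusterTree.node L R) := by
      rcases hs with h | h
      · exact subtree_trans' h subtree_left'
      · exact subtree_trans' h subtree_right'
    cases s with
    | leaf v =>
      simp only [Wdis]
      obtain ⟨x, hx, y, hy, hxy, heq⟩ := maxPairW_mem w (keyA L R hsub)
      rw [heq]
      exact minPairW_le w (Finset.mem_univ x) (Finset.mem_univ y) hxy
    | node L' R' =>
      simp only [Wdis]
      have hsubT : IsSubtreeOf (ClusterTree.node L' R') T := subtree_trans' hsub' hsub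
      have hsubset : L'.leaves ∪ R'.leaves ⊆ L.leaves ∪ R.leaves := by
        have := leaves_subset' hsub'
        rwa [leaves_node', leaves_node'] at this
      exact maxPairW_mono w hsubset (keyA L' R' hsubT)
  · intro x y hx hy hxy
    obtain ⟨L', R', heq, hsub, hcr⟩ := lca_spec' T hnd hx hy hxy
    rw [heq]
    simp only [Wdis]
    rcases hcr with ⟨hxL, hyR⟩ | ⟨hyL, hxR⟩
    · exact keyC L' R' hsub x hxL y hyR
    · rw [hsym x y hxy]
      exact keyC L' R' hsub y hyL x hxR

/-! #### Basic properties of ground-truth inputs -/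

lemma props_of_ult (w : V → V → ℝ) (h : GeneratedFromUltrametric w) :
    (∀ x y : V, x ≠ y → w x y = w y x) ∧ (∀ x y : V, x ≠ y → 0 ≤ w x y) ∧
    (∀ x y z : V, x ≠ y → x ≠ z → y ≠ z → min (w x z) (w y z) ≤ w x y) := by
  obtain ⟨d, f, ⟨hd0, hd1, hdsym, hdnn, hdtri⟩, hf, hfnn, hw⟩ := h
  refine ⟨fun x y hxy => by rw [hw x y hxy, hw y x hxy.symm, hdsym],
          fun x y hxy => by rw [hw x y hxy]; exact hfnn _ (hdnn x y), ?_⟩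
  intro x y z hxy hxz hyz
  have htri := hdtri x y z
  rcases max_cases (d x z) (d y z) with ⟨hmaxeq, _⟩ | ⟨hmaxeq, _⟩
  · rw [hmaxeq] at htri
    have hh : f (d x z) ≤ f (d x y) := hf _ _ (hdnn x y) htri
    rw [hw x y hxy, hw x z hxz]
    exact le_trans (min_le_left _ _) hh
  · rw [hmaxeq] at htri
    have hh : f (d y z) ≤ f (d x y) := hf _ _ (hdnn x y) htri
    rw [hw x y hxy, hw y z hyz]
    exact le_trans (min_le_right _ _) hh

lemma props_of_ult_dissim (w : V → V → ℝ) (h : GeneratedFromUltrametricDissim w) :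
    (∀ x y : V, x ≠ y → w x y = w y x) ∧ (∀ x y : V, x ≠ y → 0 ≤ w x y) ∧
    (∀ x y z : V, x ≠ y → x ≠ z → y ≠ z → w x y ≤ max (w x z) (w y z)) := by
  obtain ⟨d, f, ⟨hd0, hd1, hdsym, hdnn, hdtri⟩, hf, hfnn, hw⟩ := h
  refine ⟨fun x y hxy => by rw [hw x y hxy, hw y x hxy.symm, hdsym],
          fun x y hxy => by rw [hw x y hxy]; exact hfnn _ (hdnn x y), ?_⟩
  intro x y z hxy hxz hyz
  have htri := hdtri x y z
  rcases max_cases (d x z) (d y z) with ⟨hmaxeq, _⟩ | ⟨hmaxeq, _⟩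
  · rw [hmaxeq] at htri
    have hh : f (d x y) ≤ f (d x z) := hf _ _ (hdnn x y) htri
    rw [hw x y hxy, hw x z hxz]
    exact le_trans hh (le_max_left _ _)
  · rw [hmaxeq] at htri
    have hh : f (d x y) ≤ f (d y z) := hf _ _ (hdnn x y) htri
    rw [hw x y hxy, hw y z hyz]
    exact le_trans hh (le_max_right _ _)

/-! #### Upgrading a ground-truth input to a minimal one -/

lemma minUlt_of_ult [Fintype V] [DecidableEq V] (w : V → V → ℝ)
    (h : GeneratedFromUltrametric w) : GeneratedFromMinimalUltrametric w := by
  obtain ⟨hsym, hnn, hmin⟩ := props_of_ult w h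
  set M := maxPairW w (Finset.univ : Finset V) with hM
  have hle : ∀ x y : V, x ≠ y → w x y ≤ M := fun x y hxy =>
    le_maxPairW w (Finset.mem_univ x) (Finset.mem_univ y) hxy
  set d' : V → V → ℝ := fun x y => if x = y then 0 else M - w x y + 1 with hd'
  set f' : ℝ → ℝ := fun a => max (M + 1 - a) 0 with hf'
  have hwd : ∀ x y : V, x ≠ y → w x y = f' (d' x y) := by
    intro x y hxy
    simp only [hd', hf', if_neg hxy]
    rw [show M + 1 - (M - w x y + 1) = w x y by ring, max_eq_left (hnn x y hxy)]
  have hd'0 : ∀ x : V, d' x x = 0 := fun x => by simp [hd']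
  have hd'sym : ∀ x y : V, d' x y = d' y x := by
    intro x y
    by_cases hxy : x = y
    · subst hxy; rfl
    · simp only [hd', if_neg hxy, if_neg (Ne.symm hxy)]
      rw [hsym x y hxy]
  have hd'nn : ∀ u v : V, 0 ≤ d' u v := by
    intro u v
    by_cases huv : u = v
    · simp [hd', huv]
    · simp only [hd', if_neg huv]
      have := hle u v huv
      linarith
  refine ⟨d', f', ⟨hd'0, ?_, hd'sym, hd'nn, ?_⟩, ?_, ?_, ?_, ?_⟩
  · intro x y h0
    by_contra hxy
    simp only [hd', if_neg hxy] at h0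
    have := hle x y hxy
    linarith
  · intro x y z
    by_cases hxy : x = y
    · rw [hxy, hd'0]
      exact le_max_of_le_left (hd'nn y z)
    · by_cases hzx : z = x
      · subst hzx
        rw [hd'0, max_eq_right (hd'nn y z), hd'sym z y]
      · by_cases hzy : z = y
        · subst hzy
          rw [hd'0 z, max_eq_left (hd'nn x z)]
        · -- all three distinct
          have hxz : x ≠ z := fun h => hzx h.symm
          have hyz : y ≠ z := fun h => hzy h.symm
          simp only [hd', if_neg hxy, if_neg hxz, if_neg hyz]
          have := hmin x y z hxy hxz hyz
          rcases min_cases (w x z) (w y z) with ⟨hc, _⟩ | ⟨hc, _⟩ <;> rw [hc] at this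
          · exact le_max_of_le_left (by linarith)
          · exact le_max_of_le_right (by linarith)
  · intro a b ha hab
    simp only [hf']
    exact max_le_max (by linarith) le_rfl
  · intro a _; exact le_max_right _ _
  · exact hwd
  · intro u v u' v' huv hu'v' hfeq
    have h1 := hwd u v huv
    have h2 := hwd u' v' hu'v'
    have hww : w u v = w u' v' := by rw [h1, h2, hfeq]
    simp only [hd', if_neg huv, if_neg hu'v']
    linarith

lemma minUlt_of_ult_dissim [Fintype V] [DecidableEq V] (w : V → V → ℝ)
    (h : GeneratedFromUltrametricDissim w) : GeneratedFromMinimalUltrametricDissim w := by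
  obtain ⟨hsym, hnn, hmax⟩ := props_of_ult_dissim w h
  set d' : V → V → ℝ := fun x y => if x = y then 0 else w x y + 1 with hd'
  set f' : ℝ → ℝ := fun a => max (a - 1) 0 with hf'
  have hwd : ∀ x y : V, x ≠ y → w x y = f' (d' x y) := by
    intro x y hxy
    simp only [hd', hf', if_neg hxy]
    rw [show w x y + 1 - 1 = w x y by ring, max_eq_left (hnn x y hxy)]
  have hd'0 : ∀ x : V, d' x x = 0 := fun x => by simp [hd']
  have hd'sym : ∀ x y : V, d' x y = d' y x := by
    intro x y
    by_cases hxy : x = y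
    · subst hxy; rfl
    · simp only [hd', if_neg hxy, if_neg (Ne.symm hxy)]
      rw [hsym x y hxy]
  have hd'nn : ∀ u v : V, 0 ≤ d' u v := by
    intro u v
    by_cases huv : u = v
    · simp [hd', huv]
    · simp only [hd', if_neg huv]
      have := hnn u v huv
      linarith
  refine ⟨d', f', ⟨hd'0, ?_, hd'sym, hd'nn, ?_⟩, ?_, ?_, ?_, ?_⟩
  · intro x y h0
    by_contra hxy
    simp only [hd', if_neg hxy] at h0
    have := hnn x y hxy
    linarith
  · intro x y z
    by_cases hxy : x = y
    · rw [hxy, hd'0]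
      exact le_max_of_le_left (hd'nn y z)
    · by_cases hzx : z = x
      · subst hzx
        rw [hd'0, max_eq_right (hd'nn y z), hd'sym z y]
      · by_cases hzy : z = y
        · subst hzy
          rw [hd'0 z, max_eq_left (hd'nn x z)]
        · have hxz : x ≠ z := fun h => hzx h.symm
          have hyz : y ≠ z := fun h => hzy h.symm
          simp only [hd', if_neg hxy, if_neg hxz, if_neg hyz]
          have := hmax x y z hxy hxz hyz
          rcases max_cases (w x z) (w y z) with ⟨hc, _⟩ | ⟨hc, _⟩ <;> rw [hc] at this
          · exact le_max_of_le_left (by linarith)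
          · exact le_max_of_le_right (by linarith)
  · intro a b ha hab
    simp only [hf']
    exact max_le_max (by linarith) le_rfl
  · intro a _; exact le_max_right _ _
  · exact hwd
  · intro u v u' v' huv hu'v' hfeq
    have h1 := hwd u v huv
    have h2 := hwd u' v' hu'v'
    have hww : w u v = w u' v' := by rw [h1, h2, hfeq]
    simp only [hd', if_neg huv, if_neg hu'v']
    linarith

end Statement12Aux2
end

/-- Theorem 10, CKMM: the recursive sparsest-cut algorithm computes
a generating tree (hence a tree of optimal cost for every admissible objective) on
similarity ground-truth inputs; analogously, the recursive densest-cut algorithm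
does so on dissimilarity ground-truth inputs. -/
theorem statement12 {V : Type} [Fintype V] [DecidableEq V] (w : V → V → ℝ) :
    (GeneratedFromUltrametric w →
      ∀ T : ClusterTree V, IsClusterTree T → IsRecSparsestCutTree w T →
        IsGenerating w T ∧
          ∀ g : ℕ → ℕ → ℝ, Admissible g →
            ∀ T' : ClusterTree V, IsClusterTree T' →
              treeCost w g T ≤ treeCost w g T') ∧
    (GeneratedFromUltrametricDissim w →
      ∀ T : ClusterTree V, IsClusterTree T → IsRecDensestCutTree w T →
        IsGeneratingDissim w T ∧
          ∀ g : ℕ → ℕ → ℝ, AdmissibleDissim g →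
            ∀ T' : ClusterTree V, IsClusterTree T' →
              treeCost w g T' ≤ treeCost w g T) := by
  constructor
  · intro hGT T hT hrec
    obtain ⟨hsym, hnn, hmin⟩ := props_of_ult w hGT
    have hgen : IsGenerating w T := generating_of_recSC w hsym hnn hmin T hT.1 hrec
    refine ⟨hgen, fun g hadm T' hT' => ?_⟩
    exact ((hadm V w (minUlt_of_ult w hGT) T hT).mpr hgen) T' hT'
  · intro hGT T hT hrec
    obtain ⟨hsym, hnn, hmax⟩ := props_of_ult_dissim w hGT
    have hgen : IsGeneratingDissim w T := generating_of_recDC w hsym hnn hmax T hT.1 hrec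
    refine ⟨hgen, fun g hadm T' hT' => ?_⟩
    exact ((hadm V w (minUlt_of_ult_dissim w hGT) T hT).mpr hgen) T' hT'
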